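/- There is an absolute constant c > 0 such that in the herald-protocol round model, for every vertex u, every integer k ≥ 1, every channel i ∈ {1,…,n_A}, and every subset S ⊆ N^k(u) with γ(s) > 0 for all s ∈ S, the following holds: conditioned on the event that every vertex of S operates on channel i (an event of positive probability), the probability that some vertex of N^k(u) receives a message on some channel j ∈ {1,…,n_A} with j ≠ i is at most c · π_ℓ · α(G[N^k(u)]). -/

import Mathlib

/-!
Conditioning on every vertex of `S` operating on channel `i` is conditioning on a cylinder
event, of probability `∏_{s ∈ S} γ(s) 2^{-i} > 0`. A vertex `x` that receives on a channel
`j ≠ i` lies in `C = N^k(u) \ S`, listens on `j`, and at most one of its neighbours in `C`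
broadcasts on `j`. By independence this has conditional probability at most
`π_ℓ γ(x) 2^{-j} · 3 exp(-2^{-j} Γ°_C(x) / 4)`, and summing over `j` the exponential decay
of this bound in `2^{-j} Γ°_C(x)` gives `O(π_ℓ γ(x) / (1 + Γ°_C(x)))`. A weighted Caro–Wei
inequality bounds `∑_{x ∈ C} γ(x) / (1 + Γ°_C(x))` by `α(G[C]) ≤ α(G[N^k(u)])`.
-/

open Finset

/-- The action a vertex takes in one round: `none` is idle, `some (i, false)` is listening on
channel `i+1`, and `some (i, true)` is broadcasting on channel `i+1` (channels are numbered
`1, …, nA`). -/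
abbrev Act (nA : ℕ) := Option (Fin nA × Bool)

/-- The probability of each action in the herald-protocol round model, for a vertex with
activity `g` and listening probability `p`: on channel `i+1` the vertex listens with
probability `p·g·2^{-(i+1)}` and broadcasts with probability `(1−p)·g·2^{-(i+1)}`; with the
remaining probability it is idle. -/
noncomputable def actProb (nA : ℕ) (p g : ℝ) : Act nA → ℝ
  | some (i, false) => p * g * (2 : ℝ) ^ (-((i.1 : ℤ) + 1))
  | some (i, true) => (1 - p) * g * (2 : ℝ) ^ (-((i.1 : ℤ) + 1))
  | none => 1 - ∑ i : Fin nA, g * (2 : ℝ) ^ (-((i.1 : ℤ) + 1))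

open Classical in
/-- The probability of an event `E` in one round of the herald-protocol round model, where all
vertices choose their actions independently. -/
noncomputable def roundPr {V : Type*} [Fintype V] [DecidableEq V] (nA : ℕ) (p : ℝ)
    (γ : V → ℝ) (E : (V → Act nA) → Prop) : ℝ :=
  ∑ f : V → Act nA, if E f then ∏ v, actProb nA p (γ v) (f v) else 0

/-- `v` listens on channel `i` (i.e. channel number `i+1`). -/
def listens {V : Type*} {nA : ℕ} (f : V → Act nA) (v : V) (i : Fin nA) : Prop :=
  f v = some (i, false)

/-- `v` broadcasts on channel `i` (i.e. channel number `i+1`). -/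
def broadcasts {V : Type*} {nA : ℕ} (f : V → Act nA) (v : V) (i : Fin nA) : Prop :=
  f v = some (i, true)

/-- `v` operates (listens or broadcasts) on channel `i`. -/
def operates {V : Type*} {nA : ℕ} (f : V → Act nA) (v : V) (i : Fin nA) : Prop :=
  listens f v i ∨ broadcasts f v i

open Classical in
/-- `v` receives a message on channel `i`: it listens on channel `i` and exactly one of its
neighbors broadcasts on channel `i`. -/
def receivesOn {V : Type*} [Fintype V] [DecidableEq V] (G : SimpleGraph V)
    [DecidableRel G.Adj] {nA : ℕ} (f : V → Act nA) (v : V) (i : Fin nA) : Prop :=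
  listens f v i ∧ ((G.neighborFinset v).filter fun w => broadcasts f w i).card = 1

/-- `v` receives a message (on some channel). -/
def receives {V : Type*} [Fintype V] [DecidableEq V] (G : SimpleGraph V)
    [DecidableRel G.Adj] {nA : ℕ} (f : V → Act nA) (v : V) : Prop :=
  ∃ i : Fin nA, receivesOn G f v i

/-- `ball G u k` is the set `N^k(u)` of vertices at distance at most `k` from `u` in `G`
(including `u` itself). -/
def ball {V : Type*} (G : SimpleGraph V) (u : V) (k : ℕ) : Set V :=
  {v | ∃ p : G.Walk u v, p.length ≤ k}

/-- The independence number of the subgraph of `G` induced by a vertex set `S`. -/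
noncomputable def indepNumOn {V : Type*} [Fintype V] (G : SimpleGraph V) (S : Set V) : ℕ :=
  sSup {n | ∃ s : Finset V, ↑s ⊆ S ∧ (∀ a ∈ s, ∀ b ∈ s, a ≠ b → ¬ G.Adj a b) ∧ s.card = n}

/-- `Γ(x) = ∑_{y ∈ N(x) ∪ {x}} γ(y)`. -/
noncomputable def Gam {V : Type*} [Fintype V] [DecidableEq V] (G : SimpleGraph V)
    [DecidableRel G.Adj] (γ : V → ℝ) (x : V) : ℝ :=
  ∑ y ∈ insert x (G.neighborFinset x), γ y

/-- `Γ°(x) = ∑_{y ∈ N(x)} γ(y)`. -/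
noncomputable def GamO {V : Type*} [Fintype V] [DecidableEq V] (G : SimpleGraph V)
    [DecidableRel G.Adj] (γ : V → ℝ) (x : V) : ℝ :=
  ∑ y ∈ G.neighborFinset x, γ y

open Real

lemma sum_range_half_pow_succ_le_one (n : ℕ) : ∑ j ∈ range n, (1 / 2 : ℝ) ^ (j + 1) ≤ 1 := by
  have h := sum_geometric_two_le n
  simp only [pow_succ, ← sum_mul] at h ⊢
  linarith

lemma prod_one_sub_le_exp_neg_sum {ι : Type*} (T : Finset ι) (β : ι → ℝ)
    (hβ : ∀ y ∈ T, β y ≤ 1) : ∏ y ∈ T, (1 - β y) ≤ exp (-∑ y ∈ T, β y) := by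
  rw [← sum_neg_distrib, Real.exp_sum]
  exact prod_le_prod (fun y hy => sub_nonneg.2 (hβ y hy)) fun y _ => one_sub_le_exp_neg _

lemma one_add_two_mul_le_three_mul_exp_half {P : ℝ} (hP : 0 ≤ P) :
    1 + 2 * P ≤ 3 * exp (P / 2) := by
  nlinarith [quadratic_le_exp_of_nonneg (by positivity : (0 : ℝ) ≤ P / 2)]

/-- The left side is the probability that at most one of independent events with probabilities
`β y` occurs. -/
lemma prod_one_sub_add_sum_mul_prod_erase_le {ι : Type*} [DecidableEq ι] (T : Finset ι)
    (β : ι → ℝ) (hβ₀ : ∀ y ∈ T, 0 ≤ β y) (hβ₁ : ∀ y ∈ T, β y ≤ 1 / 2) :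
    ∏ y ∈ T, (1 - β y) + ∑ y ∈ T, β y * ∏ z ∈ T.erase y, (1 - β z)
      ≤ 3 * exp (-(∑ y ∈ T, β y) / 2) := by
  set P := ∑ y ∈ T, β y
  have hβle1 : ∀ y ∈ T, β y ≤ 1 := fun y hy => (hβ₁ y hy).trans (by norm_num)
  have hP : 0 ≤ P := sum_nonneg hβ₀
  have herase : ∀ y ∈ T, ∏ z ∈ T.erase y, (1 - β z) ≤ 2 * exp (-P) := fun y hy =>
    calc ∏ z ∈ T.erase y, (1 - β z) ≤ exp (-(P - β y)) := by
          rw [← sum_erase_eq_sub hy]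
          exact prod_one_sub_le_exp_neg_sum _ _ fun z hz => hβle1 z (mem_of_mem_erase hz)
      _ = exp (β y) * exp (-P) := by rw [← Real.exp_add]; ring_nf
      _ ≤ 2 * exp (-P) := by
          gcongr
          calc exp (β y) ≤ exp (1 / 2) := exp_le_exp.2 (hβ₁ y hy)
            _ ≤ 1 / (1 - 1 / 2) := exp_bound_div_one_sub_of_interval (by norm_num) (by norm_num)
            _ = 2 := by norm_num
  calc ∏ y ∈ T, (1 - β y) + ∑ y ∈ T, β y * ∏ z ∈ T.erase y, (1 - β z)
      ≤ exp (-P) + ∑ y ∈ T, β y * (2 * exp (-P)) := by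
        gcongr with y hy
        · exact prod_one_sub_le_exp_neg_sum T β hβle1
        · exact hβ₀ y hy
        · exact herase y hy
    _ = (1 + 2 * P) * exp (-P) := by rw [← sum_mul]; ring
    _ ≤ 3 * exp (P / 2) * exp (-P) := by gcongr; exact one_add_two_mul_le_three_mul_exp_half hP
    _ = 3 * exp (-P / 2) := by rw [mul_assoc, ← Real.exp_add]; ring_nf

lemma sum_range_half_pow_mul_exp_le (n : ℕ) {s : ℝ} (hs : 0 ≤ s) :
    ∑ j ∈ range n, (1 / 2 : ℝ) ^ (j + 1) * exp (-(s * (1 / 2) ^ (j + 1))) ≤ 3 / (1 + s) := by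
  set r : ℕ → ℝ := fun j => (1 / 2 : ℝ) ^ (j + 1)
  set F : ℕ → ℝ := fun j => exp (-(s * r j))
  have hF₁ : ∀ j, F j ≤ 1 := fun j => exp_le_one_iff.2 (neg_nonpos.2 (by positivity))
  -- `u e^{-u} ≤ 2 (e^{-u/2} - e^{-u})` with `u = s r_j`, since `r_{j+1} = r_j / 2`
  have hstep : ∀ j, s * (r j * F j) ≤ 2 * (F (j + 1) - F j) := fun j => by
    have hu : 0 ≤ s * r j := by positivity
    have hF : F (j + 1) = F j * exp (s * r j / 2) := by
      simp only [F, r, ← Real.exp_add, pow_succ]; ring_nf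
    rw [hF]
    nlinarith [add_one_le_exp (s * r j / 2), exp_pos (-(s * r j))]
  have hmass : ∑ j ∈ range n, r j * F j ≤ 1 :=
    (sum_le_sum fun j _ => mul_le_of_le_one_right (by positivity) (hF₁ j)).trans
      (sum_range_half_pow_succ_le_one n)
  have htail : s * ∑ j ∈ range n, r j * F j ≤ 2 :=
    calc s * ∑ j ∈ range n, r j * F j ≤ ∑ j ∈ range n, 2 * (F (j + 1) - F j) := by
          rw [mul_sum]; exact sum_le_sum fun j _ => hstep j
      _ = 2 * (F n - F 0) := by rw [← mul_sum, sum_range_sub]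
      _ ≤ 2 := by nlinarith [hF₁ n, exp_pos (-(s * r 0))]
  rw [le_div_iff₀ (by linarith)]
  nlinarith

lemma sum_fin_half_pow_mul_exp_le (n : ℕ) {p t : ℝ} (hp : p ≤ 1 / 2) (ht : 0 ≤ t) :
    ∑ j : Fin n, (1 / 2 : ℝ) ^ (j.1 + 1) * exp (-((1 - p) * (1 / 2) ^ (j.1 + 1) * t) / 2)
      ≤ 12 / (1 + t) := by
  calc _ ≤ ∑ j : Fin n, (1 / 2 : ℝ) ^ (j.1 + 1) * exp (-(t / 4 * (1 / 2) ^ (j.1 + 1))) := by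
        gcongr with j
        have : 0 ≤ (1 / 2 : ℝ) ^ (j.1 + 1) * t := by positivity
        nlinarith
    _ = ∑ j ∈ range n, (1 / 2 : ℝ) ^ (j + 1) * exp (-(t / 4 * (1 / 2) ^ (j + 1))) :=
        Fin.sum_univ_eq_sum_range
          (fun j => (1 / 2 : ℝ) ^ (j + 1) * exp (-(t / 4 * (1 / 2) ^ (j + 1)))) n
    _ ≤ 3 / (1 + t / 4) := sum_range_half_pow_mul_exp_le n (by positivity)
    _ ≤ 12 / (1 + t) := by rw [div_le_div_iff₀ (by positivity) (by positivity)]; nlinarith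

lemma two_zpow_neg_succ (j : ℕ) : (2 : ℝ) ^ (-((j : ℤ) + 1)) = (1 / 2) ^ (j + 1) := by
  rw [one_div, inv_pow, ← zpow_natCast, ← zpow_neg]; norm_cast

section ActProb

variable {nA : ℕ} {p g : ℝ}

@[simp]
lemma actProb_listen (j : Fin nA) :
    actProb nA p g (some (j, false)) = p * g * (1 / 2) ^ (j.1 + 1) := by
  rw [actProb, two_zpow_neg_succ]

@[simp]
lemma actProb_broadcast (j : Fin nA) :
    actProb nA p g (some (j, true)) = (1 - p) * g * (1 / 2) ^ (j.1 + 1) := by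
  rw [actProb, two_zpow_neg_succ]

lemma actProb_none : actProb nA p g none = 1 - g * ∑ j ∈ range nA, (1 / 2 : ℝ) ^ (j + 1) := by
  simp only [actProb, two_zpow_neg_succ, mul_sum]
  rw [Fin.sum_univ_eq_sum_range (fun j => g * (1 / 2 : ℝ) ^ (j + 1))]

lemma actProb_nonneg (hp₀ : 0 ≤ p) (hp₁ : p ≤ 1) (hg₀ : 0 ≤ g) (hg₁ : g ≤ 1) (a : Act nA) :
    0 ≤ actProb nA p g a := by
  rcases a with _ | ⟨j, _ | _⟩
  · rw [actProb_none]
    nlinarith [sum_range_half_pow_succ_le_one nA]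
  · rw [actProb_listen]; positivity
  · have : 0 ≤ 1 - p := by linarith
    rw [actProb_broadcast]; positivity

lemma sum_actProb : ∑ a : Act nA, actProb nA p g a = 1 := by
  simp only [Fintype.sum_option, Fintype.sum_prod_type, Fintype.sum_bool, actProb_listen,
    actProb_broadcast, actProb_none, mul_sum]
  rw [Fin.sum_univ_eq_sum_range
    (fun j => (1 - p) * g * (1 / 2 : ℝ) ^ (j + 1) + p * g * (1 / 2) ^ (j + 1))]
  simp only [← add_mul, sub_add_cancel, one_mul]

lemma sum_actProb_erase (b : Act nA) :
    ∑ a ∈ univ.erase b, actProb nA p g a = 1 - actProb nA p g b := by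
  rw [sum_erase_eq_sub (mem_univ b), sum_actProb]

end ActProb

lemma exists_mem_insertNone_of_card_filter_le_one {α : Type*} {T : Finset α} {P : α → Prop}
    [DecidablePred P] (h : #(T.filter P) ≤ 1) :
    ∃ o ∈ T.insertNone, ∀ y ∈ T, P y ↔ o = some y := by
  rcases Nat.le_one_iff_eq_zero_or_eq_one.1 h with h | h
  · refine ⟨none, none_mem_insertNone, fun y hy => ?_⟩
    simpa using filter_eq_empty_iff.1 (card_eq_zero.1 h) hy
  · obtain ⟨y₀, hy₀⟩ := card_eq_one.1 h
    have hy₀T : y₀ ∈ T := (mem_filter.1 (hy₀ ▸ mem_singleton_self y₀)).1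
    refine ⟨some y₀, some_mem_insertNone.2 hy₀T, fun y hy => ?_⟩
    simpa [hy, eq_comm] using congrArg (y ∈ ·) hy₀

lemma prod_actProb_nonneg {V : Type*} [Fintype V] {nA : ℕ} {p : ℝ} {γ : V → ℝ} (hp₀ : 0 ≤ p)
    (hp₁ : p ≤ 1) (hγ : ∀ v, 0 ≤ γ v ∧ γ v ≤ 1) (f : V → Act nA) :
    0 ≤ ∏ v, actProb nA p (γ v) (f v) :=
  prod_nonneg fun v _ => actProb_nonneg hp₀ hp₁ (hγ v).1 (hγ v).2 _

section RoundPr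

variable {V : Type*} [Fintype V] [DecidableEq V] {nA : ℕ} {p : ℝ} {γ : V → ℝ}

lemma roundPr_congr {E F : (V → Act nA) → Prop} (h : ∀ f, E f ↔ F f) :
    roundPr nA p γ E = roundPr nA p γ F := by
  rw [funext fun f => propext (h f)]

lemma roundPr_nonneg (hp₀ : 0 ≤ p) (hp₁ : p ≤ 1) (hγ : ∀ v, 0 ≤ γ v ∧ γ v ≤ 1)
    (E : (V → Act nA) → Prop) : 0 ≤ roundPr nA p γ E := by
  classical
  exact sum_nonneg fun f _ => ite_nonneg (prod_actProb_nonneg hp₀ hp₁ hγ f) le_rfl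

lemma roundPr_le_sum (hp₀ : 0 ≤ p) (hp₁ : p ≤ 1) (hγ : ∀ v, 0 ≤ γ v ∧ γ v ≤ 1)
    {ι : Type*} (K : Finset ι) {E : (V → Act nA) → Prop} {F : ι → (V → Act nA) → Prop}
    (h : ∀ f, E f → ∃ k ∈ K, F k f) :
    roundPr nA p γ E ≤ ∑ k ∈ K, roundPr nA p γ (F k) := by
  classical
  have hw : ∀ f : V → Act nA, (0 : ℝ) ≤ _ := prod_actProb_nonneg hp₀ hp₁ hγ
  unfold roundPr
  rw [Finset.sum_comm]
  refine sum_le_sum fun f _ => ?_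
  split_ifs with hE
  · obtain ⟨k, hk, hFk⟩ := h f hE
    calc _ = if F k f then ∏ v, actProb nA p (γ v) (f v) else 0 := (if_pos hFk).symm
      _ ≤ _ := single_le_sum (f := fun k => if F k f then ∏ v, actProb nA p (γ v) (f v) else 0)
          (fun k _ => ite_nonneg (hw f) le_rfl) hk
  · exact sum_nonneg fun k _ => ite_nonneg (hw f) le_rfl

lemma roundPr_forall_mem (A : V → Finset (Act nA)) :
    roundPr nA p γ (fun f => ∀ v, f v ∈ A v) = ∏ v, ∑ a ∈ A v, actProb nA p (γ v) a := by
  rw [prod_univ_sum, ← univ_inter (Fintype.piFinset A), ← sum_ite_mem, roundPr]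
  exact sum_congr rfl fun f _ => by congr 1; exact propext Fintype.mem_piFinset.symm

lemma roundPr_forall_mem_piecewise (A B : V → Finset (Act nA)) (T : Finset V)
    (hA : ∀ v ∈ T, A v = univ) :
    roundPr nA p γ (fun f => ∀ v, f v ∈ T.piecewise B A v)
      = roundPr nA p γ (fun f => ∀ v, f v ∈ A v) * ∏ v ∈ T, ∑ a ∈ B v, actProb nA p (γ v) a := by
  rw [roundPr_forall_mem, roundPr_forall_mem,
    ← prod_compl_mul_prod T (fun v => ∑ a ∈ T.piecewise B A v, actProb nA p (γ v) a),
    ← prod_compl_mul_prod T (fun v => ∑ a ∈ A v, actProb nA p (γ v) a),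
    prod_eq_one (s := T) (f := fun v => ∑ a ∈ A v, actProb nA p (γ v) a)
      fun v hv => by rw [hA v hv, sum_actProb], mul_one]
  congr 1
  · exact prod_congr rfl fun v hv => by rw [piecewise_eq_of_notMem _ _ _ (mem_compl.1 hv)]
  · exact prod_congr rfl fun v hv => by rw [piecewise_eq_of_mem _ _ _ hv]

lemma roundPr_forall_mem_update (A : V → Finset (Act nA)) {x : V} (hA : A x = univ)
    (s : Finset (Act nA)) :
    roundPr nA p γ (fun f => ∀ v, f v ∈ Function.update A x s v)
      = roundPr nA p γ (fun f => ∀ v, f v ∈ A v) * ∑ a ∈ s, actProb nA p (γ x) a := by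
  rw [← piecewise_singleton (fun _ => s), roundPr_forall_mem_piecewise _ _ _ (by simpa),
    prod_singleton]

/-- Split according to which vertex of `T`, if any, takes action `b`: each piece is a cylinder
event. -/
lemma roundPr_forall_mem_and_card_le_one_le (hp₀ : 0 ≤ p) (hp₁ : p ≤ 1)
    (hγ : ∀ v, 0 ≤ γ v ∧ γ v ≤ 1) (A : V → Finset (Act nA)) (T : Finset V)
    (hA : ∀ v ∈ T, A v = univ) (b : Act nA) :
    roundPr nA p γ (fun f => (∀ v, f v ∈ A v) ∧ #{y ∈ T | f y = b} ≤ 1)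
      ≤ roundPr nA p γ (fun f => ∀ v, f v ∈ A v) *
        (∏ y ∈ T, (1 - actProb nA p (γ y) b) +
          ∑ y ∈ T, actProb nA p (γ y) b * ∏ z ∈ T.erase y, (1 - actProb nA p (γ z) b)) := by
  set B : Option V → V → Finset (Act nA) := fun o =>
    T.piecewise (fun v => if o = some v then {b} else univ.erase b) A
  have hmass : ∀ o v, ∑ a ∈ (if o = some v then {b} else univ.erase b), actProb nA p (γ v) a
      = if o = some v then actProb nA p (γ v) b else 1 - actProb nA p (γ v) b := fun o v => by
    split_ifs
    · exact sum_singleton _ _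
    · exact sum_actProb_erase b
  calc _ ≤ ∑ o ∈ T.insertNone, roundPr nA p γ (fun f => ∀ v, f v ∈ B o v) := by
        refine roundPr_le_sum hp₀ hp₁ hγ _ fun f ⟨hfA, hcard⟩ => ?_
        obtain ⟨o, ho, hbo⟩ := exists_mem_insertNone_of_card_filter_le_one hcard
        refine ⟨o, ho, fun v => ?_⟩
        simp only [B]
        by_cases hv : v ∈ T
        · rw [piecewise_eq_of_mem _ _ _ hv]
          split_ifs with hov
          · exact mem_singleton.2 ((hbo v hv).2 hov)
          · exact mem_erase.2 ⟨fun h => hov ((hbo v hv).1 h), mem_univ _⟩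
        · rw [piecewise_eq_of_notMem _ _ _ hv]
          exact hfA v
    _ = _ := by
      simp only [B, roundPr_forall_mem_piecewise _ _ _ hA, ← mul_sum, sum_insertNone, hmass,
        reduceCtorEq, if_false, Option.some.injEq]
      congr 2
      refine sum_congr rfl fun y hy => ?_
      rw [← mul_prod_erase _ _ hy, if_pos rfl]
      exact congrArg _ (prod_congr rfl fun z hz => if_neg (ne_of_mem_erase hz).symm)

end RoundPr

lemma card_le_indepNumOn {V : Type*} [Fintype V] (G : SimpleGraph V) {B : Set V} {s : Finset V}
    (hsB : (s : Set V) ⊆ B) (hs : G.IsIndepSet (s : Set V)) : #s ≤ indepNumOn G B :=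
  le_csSup ⟨Fintype.card V, by rintro n ⟨t, -, -, rfl⟩; exact card_le_univ t⟩
    ⟨s, hsB, fun _ ha _ hb hab => hs ha hb hab, rfl⟩

section CaroWei

variable {V : Type*} [Fintype V] [DecidableEq V] (G : SimpleGraph V) [DecidableRel G.Adj]
  {γ : V → ℝ}

variable (γ) in
/-- `Γ°_C(x)`, i.e. `Γ°(x)` computed in the induced subgraph `G[C]`. -/
noncomputable def GamOOn (C : Finset V) (x : V) : ℝ :=
  ∑ y ∈ G.neighborFinset x ∩ C, γ y

lemma GamOOn_nonneg (hγ : ∀ v, 0 ≤ γ v) (C : Finset V) (x : V) : 0 ≤ GamOOn G γ C x :=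
  sum_nonneg fun y _ => hγ y

lemma GamOOn_mono (hγ : ∀ v, 0 ≤ γ v) {C C' : Finset V} (h : C' ⊆ C) (x : V) :
    GamOOn G γ C' x ≤ GamOOn G γ C x :=
  sum_le_sum_of_subset_of_nonneg (inter_subset_inter_left h) fun y _ _ => hγ y

lemma sum_div_one_add_GamOOn_le_of_subset (hγ : ∀ v, 0 ≤ γ v) {C C' : Finset V} (h : C' ⊆ C) :
    ∑ x ∈ C', γ x / (1 + GamOOn G γ C x) ≤ ∑ x ∈ C', γ x / (1 + GamOOn G γ C' x) :=
  sum_le_sum fun x _ => div_le_div_of_nonneg_left (hγ x)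
    (by linarith [GamOOn_nonneg G hγ C' x]) (by linarith [GamOOn_mono G hγ h x])

lemma sum_insert_neighborFinset_div_le_one (hγ₀ : ∀ v, 0 ≤ γ v) (hγ₁ : ∀ v, γ v ≤ 1)
    {C : Finset V} {x₀ : V} (hx₀ : x₀ ∈ C)
    (hmin : ∀ x ∈ C, γ x₀ + GamOOn G γ C x₀ ≤ γ x + GamOOn G γ C x) :
    ∑ x ∈ insert x₀ (G.neighborFinset x₀ ∩ C), γ x / (1 + GamOOn G γ C x) ≤ 1 := by
  set K := insert x₀ (G.neighborFinset x₀ ∩ C)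
  have hKC : K ⊆ C := insert_subset hx₀ inter_subset_right
  have hwK : ∑ x ∈ K, γ x = γ x₀ + GamOOn G γ C x₀ :=
    sum_insert fun h => G.notMem_neighborFinset_self x₀ (mem_inter.1 h).1
  rcases (add_nonneg (hγ₀ x₀) (GamOOn_nonneg G hγ₀ C x₀)).eq_or_lt with hw | hw
  · calc _ ≤ ∑ x ∈ K, γ x :=
          sum_le_sum fun x _ => div_le_self (hγ₀ x) (by linarith [GamOOn_nonneg G hγ₀ C x])
      _ ≤ 1 := by linarith
  · -- `1 + Γ°_C(x) ≥ γ x + Γ°_C(x) ≥ γ x₀ + Γ°_C(x₀)`, which is the total weight of `K`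
    calc _ ≤ ∑ x ∈ K, γ x / (γ x₀ + GamOOn G γ C x₀) :=
          sum_le_sum fun x hx => div_le_div_of_nonneg_left (hγ₀ x) hw
            (by linarith [hmin x (hKC hx), hγ₁ x])
      _ = 1 := by rw [← sum_div, hwK, div_self hw.ne']

/-- A weighted Caro–Wei inequality. The greedy step takes a vertex minimising `γ x + Γ°_C(x)`
and deletes its closed neighbourhood. -/
lemma exists_isIndepSet_sum_div_le_card (hγ₀ : ∀ v, 0 ≤ γ v) (hγ₁ : ∀ v, γ v ≤ 1)
    (C : Finset V) : ∃ s ⊆ C, G.IsIndepSet (s : Set V) ∧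
      ∑ x ∈ C, γ x / (1 + GamOOn G γ C x) ≤ #s := by
  induction C using Finset.strongInduction with
  | _ C ih =>
  rcases C.eq_empty_or_nonempty with rfl | hC
  · exact ⟨∅, subset_refl _, by simp, by simp⟩
  obtain ⟨x₀, hx₀, hmin⟩ := exists_min_image C (fun x => γ x + GamOOn G γ C x) hC
  set K := insert x₀ (G.neighborFinset x₀ ∩ C)
  have hKC : K ⊆ C := insert_subset hx₀ inter_subset_right
  obtain ⟨s, hsC, hs, hsum⟩ := ih (C \ K) (sdiff_ssubset hKC ⟨x₀, mem_insert_self _ _⟩)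
  have hx₀s : ∀ y ∈ s, y ∉ K := fun y hy => (mem_sdiff.1 (hsC hy)).2
  refine ⟨insert x₀ s, insert_subset hx₀ (hsC.trans sdiff_subset), ?_, ?_⟩
  · have : Std.Symm fun v w => ¬G.Adj v w := ⟨fun _ _ h h' => h h'.symm⟩
    rw [coe_insert, SimpleGraph.isIndepSet_iff, Set.pairwise_insert_of_symm]
    refine ⟨hs, fun y hy _ hadj => hx₀s y hy ?_⟩
    exact mem_insert_of_mem
      (mem_inter.2 ⟨(G.mem_neighborFinset _ _).2 hadj, (mem_sdiff.1 (hsC hy)).1⟩)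
  · rw [← sum_sdiff hKC, card_insert_of_notMem fun h => hx₀s x₀ h (mem_insert_self _ _)]
    push_cast
    linarith [sum_div_one_add_GamOOn_le_of_subset G hγ₀ (sdiff_subset : C \ K ⊆ C),
      sum_insert_neighborFinset_div_le_one G hγ₀ hγ₁ hx₀ hmin]

lemma sum_div_one_add_GamOOn_le_indepNumOn (hγ₀ : ∀ v, 0 ≤ γ v) (hγ₁ : ∀ v, γ v ≤ 1)
    {B : Set V} {C : Finset V} (hCB : (C : Set V) ⊆ B) :
    ∑ x ∈ C, γ x / (1 + GamOOn G γ C x) ≤ indepNumOn G B := by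
  obtain ⟨s, hsC, hs, hsum⟩ := exists_isIndepSet_sum_div_le_card G hγ₀ hγ₁ C
  exact hsum.trans (by exact_mod_cast card_le_indepNumOn G ((coe_subset.2 hsC).trans hCB) hs)

end CaroWei

section Protocol

variable {V : Type*} {nA : ℕ}

open Classical in
noncomputable def operatesCylinder (S : Set V) (i : Fin nA) (v : V) : Finset (Act nA) :=
  if v ∈ S then {some (i, false), some (i, true)} else univ

lemma forall_operates_iff (S : Set V) (i : Fin nA) (f : V → Act nA) :
    (∀ s ∈ S, operates f s i) ↔ ∀ v, f v ∈ operatesCylinder S i v := by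
  refine forall_congr' fun v => ?_
  by_cases hv : v ∈ S <;> simp [operatesCylinder, hv, operates, listens, broadcasts]

variable [Fintype V] [DecidableEq V] {p : ℝ} {γ : V → ℝ}

lemma roundPr_forall_operates_pos {S : Set V} (i : Fin nA) (hγS : ∀ s ∈ S, 0 < γ s) :
    0 < roundPr nA p γ (fun f => ∀ s ∈ S, operates f s i) := by
  rw [roundPr_congr (forall_operates_iff S i), roundPr_forall_mem]
  refine prod_pos fun v _ => ?_
  by_cases hv : v ∈ S
  · rw [operatesCylinder, if_pos hv, sum_pair (by simp), actProb_listen, actProb_broadcast,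
      ← add_mul, ← add_mul, add_sub_cancel, one_mul]
    have := hγS v hv
    positivity
  · rw [operatesCylinder, if_neg hv, sum_actProb]
    exact one_pos

lemma roundPr_listens_and_card_le_one_le (hp₀ : 0 ≤ p) (hp₁ : p ≤ 1)
    (hγ : ∀ v, 0 ≤ γ v ∧ γ v ≤ 1) (A : V → Finset (Act nA)) {x : V} (hx : A x = univ)
    (T : Finset V) (hT : ∀ y ∈ T, y ≠ x ∧ A y = univ) (j : Fin nA) :
    roundPr nA p γ (fun f => (∀ v, f v ∈ Function.update A x {some (j, false)} v) ∧
        #{y ∈ T | f y = some (j, true)} ≤ 1)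
      ≤ roundPr nA p γ (fun f => ∀ v, f v ∈ A v) * (p * γ x * (1 / 2) ^ (j.1 + 1)) *
        (3 * exp (-((1 - p) * (1 / 2) ^ (j.1 + 1) * ∑ y ∈ T, γ y) / 2)) := by
  have hT' : ∀ y ∈ T, Function.update A x {some (j, false)} y = univ := fun y hy => by
    rw [Function.update_of_ne (hT y hy).1, (hT y hy).2]
  refine (roundPr_forall_mem_and_card_le_one_le hp₀ hp₁ hγ _ T hT' _).trans ?_
  rw [roundPr_forall_mem_update A hx, sum_singleton, actProb_listen]
  have hr : (1 / 2 : ℝ) ^ (j.1 + 1) ≤ 1 / 2 :=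
    pow_le_of_le_one (by norm_num) (by norm_num) (by simp)
  gcongr
  · have := (hγ x).1
    exact mul_nonneg (roundPr_nonneg hp₀ hp₁ hγ _) (by positivity)
  · have hβ : ∑ y ∈ T, (1 - p) * γ y * (1 / 2) ^ (j.1 + 1)
        = (1 - p) * (1 / 2) ^ (j.1 + 1) * ∑ y ∈ T, γ y := by
      rw [mul_sum]; exact sum_congr rfl fun y _ => by ring
    simp only [actProb_broadcast, ← hβ]
    refine prod_one_sub_add_sum_mul_prod_erase_le T _ (fun y _ => ?_) (fun y _ => ?_)
    · have := (hγ y).1; have : 0 ≤ 1 - p := by linarith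
      positivity
    · have := (hγ y).2; have : 0 ≤ 1 - p := by linarith
      have := (hγ y).1
      calc (1 - p) * γ y * (1 / 2) ^ (j.1 + 1) ≤ 1 * 1 * (1 / 2) := by gcongr; linarith
        _ = 1 / 2 := by norm_num

lemma sum_roundPr_listens_and_card_le_one_le (hp₀ : 0 ≤ p) (hp : p ≤ 1 / 2)
    (hγ : ∀ v, 0 ≤ γ v ∧ γ v ≤ 1) (A : V → Finset (Act nA)) {x : V} (hx : A x = univ)
    (T : Finset V) (hT : ∀ y ∈ T, y ≠ x ∧ A y = univ) :
    ∑ j : Fin nA, roundPr nA p γ (fun f => (∀ v, f v ∈ Function.update A x {some (j, false)} v) ∧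
        #{y ∈ T | f y = some (j, true)} ≤ 1)
      ≤ 36 * p * roundPr nA p γ (fun f => ∀ v, f v ∈ A v) * (γ x / (1 + ∑ y ∈ T, γ y)) := by
  have hp₁ : p ≤ 1 := by linarith
  set R := roundPr nA p γ (fun f => ∀ v, f v ∈ A v)
  have hR : 0 ≤ 3 * p * R * γ x := by
    have := roundPr_nonneg hp₀ hp₁ hγ (fun f => ∀ v, f v ∈ A v)
    have := (hγ x).1
    positivity
  have hT₀ : 0 ≤ ∑ y ∈ T, γ y := sum_nonneg fun y _ => (hγ y).1
  calc _ ≤ ∑ j : Fin nA, R * (p * γ x * (1 / 2) ^ (j.1 + 1)) *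
        (3 * exp (-((1 - p) * (1 / 2) ^ (j.1 + 1) * ∑ y ∈ T, γ y) / 2)) :=
        sum_le_sum fun j _ => roundPr_listens_and_card_le_one_le hp₀ hp₁ hγ A hx T hT j
    _ = 3 * p * R * γ x * ∑ j : Fin nA,
        (1 / 2) ^ (j.1 + 1) * exp (-((1 - p) * (1 / 2) ^ (j.1 + 1) * ∑ y ∈ T, γ y) / 2) := by
        rw [mul_sum]; exact sum_congr rfl fun j _ => by ring
    _ ≤ 3 * p * R * γ x * (12 / (1 + ∑ y ∈ T, γ y)) := by
        gcongr; exact sum_fin_half_pow_mul_exp_le nA hp hT₀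
    _ = _ := by ring

open Classical in
/-- A vertex of `B` receiving on a channel `j ≠ i` lies outside `S`, listens on `j`, and at most
one of its neighbours in `B \ S` broadcasts on `j`. -/
lemma roundPr_operates_and_receivesOn_le (hp₀ : 0 ≤ p) (hp : p ≤ 1 / 2)
    (hγ : ∀ v, 0 ≤ γ v ∧ γ v ≤ 1) (G : SimpleGraph V) [DecidableRel G.Adj] (S B : Set V)
    (i : Fin nA) :
    roundPr nA p γ (fun f => (∀ s ∈ S, operates f s i) ∧
        ∃ x ∈ B, ∃ j : Fin nA, j ≠ i ∧ receivesOn G f x j)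
      ≤ 36 * p * roundPr nA p γ (fun f => ∀ s ∈ S, operates f s i) *
        ∑ x ∈ ({x | x ∈ B ∧ x ∉ S} : Finset V),
          γ x / (1 + GamOOn G γ {x | x ∈ B ∧ x ∉ S} x) := by
  set C : Finset V := {x | x ∈ B ∧ x ∉ S}
  set A := operatesCylinder S i
  have hAC : ∀ y ∈ C, A y = univ := fun y hy => if_neg (mem_filter.1 hy).2.2
  calc _ ≤ ∑ x ∈ C, ∑ j : Fin nA, roundPr nA p γ (fun f =>
        (∀ v, f v ∈ Function.update A x {some (j, false)} v) ∧
          #{y ∈ G.neighborFinset x ∩ C | f y = some (j, true)} ≤ 1) := by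
        rw [← sum_product']
        refine roundPr_le_sum hp₀ (by linarith) hγ _
          fun f ⟨hS, x, hxB, j, hji, hlisten, hone⟩ => ?_
        have hfA := (forall_operates_iff S i f).1 hS
        have hxS : x ∉ S := fun hxS => by
          rcases hS x hxS with h | h <;> rw [listens] at hlisten <;>
            simp_all [listens, broadcasts]
        refine ⟨(x, j), mem_product.2 ⟨mem_filter.2 ⟨mem_univ _, hxB, hxS⟩, mem_univ _⟩, ?_, ?_⟩
        · intro v
          rcases eq_or_ne v x with rfl | hvx
          · rw [Function.update_self]; exact mem_singleton.2 hlisten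
          · rw [Function.update_of_ne hvx]; exact hfA v
        · refine (card_le_card fun y hy => ?_).trans hone.le
          obtain ⟨hyT, hyb⟩ := mem_filter.1 hy
          exact mem_filter.2 ⟨(mem_inter.1 hyT).1, hyb⟩
    _ ≤ ∑ x ∈ C, 36 * p * roundPr nA p γ (fun f => ∀ v, f v ∈ A v) *
          (γ x / (1 + GamOOn G γ C x)) :=
        sum_le_sum fun x hx => sum_roundPr_listens_and_card_le_one_le hp₀ hp hγ A (hAC x hx) _
          fun y hy => ⟨fun h => G.notMem_neighborFinset_self x (h ▸ (mem_inter.1 hy).1),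
            hAC y (mem_inter.1 hy).2⟩
    _ = _ := by rw [← mul_sum, roundPr_congr (forall_operates_iff S i)]

end Protocol

/-- There is an absolute constant `c > 0` such that in the herald-protocol round model, for
every vertex `u`, every `k ≥ 1`, every channel `i` and every `S ⊆ N^k(u)` with `γ(s) > 0` for
all `s ∈ S`: the event that every vertex of `S` operates on channel `i` has positive
probability, and conditioned on it, the probability that some vertex of `N^k(u)` receives a
message on some channel `j ≠ i` is at most `c · π_ℓ · α(G[N^k(u)])`. -/
theorem stmt_13 : ∃ c : ℝ, 0 < c ∧
    ∀ (V : Type) [Fintype V] [DecidableEq V] (G : SimpleGraph V) [DecidableRel G.Adj]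
      (nA : ℕ), 1 ≤ nA →
      ∀ pl : ℝ, 0 < pl → pl ≤ 1 / 2 →
      ∀ γ : V → ℝ, (∀ x, 0 ≤ γ x ∧ γ x ≤ 1 / 2) →
      ∀ (u : V) (k : ℕ), 1 ≤ k →
      ∀ (i : Fin nA) (S : Set V), S ⊆ ball G u k → (∀ s ∈ S, 0 < γ s) →
      0 < roundPr nA pl γ (fun f => ∀ s ∈ S, operates f s i) ∧
      roundPr nA pl γ (fun f => (∀ s ∈ S, operates f s i) ∧
            ∃ x ∈ ball G u k, ∃ j : Fin nA, j ≠ i ∧ receivesOn G f x j) /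
          roundPr nA pl γ (fun f => ∀ s ∈ S, operates f s i) ≤
        c * pl * (indepNumOn G (ball G u k) : ℝ) := by
  classical
  refine ⟨36, by norm_num, fun V _ _ G _ nA _ pl hpl₀ hpl γ hγ u k _ i S _ hγS => ?_⟩
  have hγ' : ∀ v, 0 ≤ γ v ∧ γ v ≤ 1 := fun v => ⟨(hγ v).1, (hγ v).2.trans (by norm_num)⟩
  have hden := roundPr_forall_operates_pos (p := pl) i hγS
  refine ⟨hden, (div_le_iff₀ hden).2 ?_⟩
  calc _ ≤ 36 * pl * roundPr nA pl γ (fun f => ∀ s ∈ S, operates f s i) * _ :=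
        roundPr_operates_and_receivesOn_le hpl₀.le hpl hγ' G S (ball G u k) i
    _ ≤ 36 * pl * roundPr nA pl γ (fun f => ∀ s ∈ S, operates f s i) *
          indepNumOn G (ball G u k) := by
        gcongr
        exact sum_div_one_add_GamOOn_le_indepNumOn G (fun v => (hγ v).1) (fun v => (hγ' v).2)
          fun x hx => (mem_filter.1 hx).2.1
    _ = _ := by ring
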